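/- Let (T,bag) be a regular rooted tree decomposition of a finite graph G of adhesion at most a, and suppose G is K_t-topological-minor-free. Then for every node x of T, the bag graph bgraph(x) is K_{t'}-topological-minor-free, where t' = max(t, a+2). -/

import Mathlib

/-- A finite rooted tree, encoded by its parent function. -/
structure RTree (ι : Type*) where
  root : ι
  parent : ι → ι
  parent_root : parent root = root
  reaches_root : ∀ x : ι, ∃ n : ℕ, parent^[n] x = root

namespace RTree

variable {ι : Type*} (T : RTree ι)

/-- `T.Anc x y` means `x` is an ancestor of `y` (every node is its own ancestor). -/
def Anc (x y : ι) : Prop := ∃ n : ℕ, T.parent^[n] y = x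

/-- `T.IsChild y x` means `y` is a child of `x`. -/
def IsChild (y x : ι) : Prop := y ≠ T.root ∧ T.parent y = x

/-- The underlying undirected graph of the rooted tree. -/
def treeGraph : SimpleGraph ι where
  Adj x y := x ≠ y ∧ (T.IsChild x y ∨ T.IsChild y x)
  symm := ⟨fun x y h => ⟨h.1.symm, h.2.symm⟩⟩
  loopless := ⟨fun x h => h.1 rfl⟩

end RTree

/-- Two vertices are connected by a walk all of whose vertices lie in `U`. -/
def ConnIn {V : Type*} (G : SimpleGraph V) (U : Set V) (a b : V) : Prop :=
  ∃ p : G.Walk a b, ∀ w ∈ p.support, w ∈ U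

theorem ConnIn.symm {V : Type*} {G : SimpleGraph V} {U : Set V} {a b : V}
    (h : ConnIn G U a b) : ConnIn G U b a := by
  obtain ⟨p, hp⟩ := h
  refine ⟨p.reverse, fun w hw => hp w ?_⟩
  rwa [SimpleGraph.Walk.support_reverse, List.mem_reverse] at hw

/-- `X` is `(q,k)`-unbreakable in the induced subgraph `G[U]`: for every separation `(A,B)`
of `G[U]` of order at most `k`, one of the two sides contains at most `q` vertices of `X`. -/
def UnbreakableIn {V : Type*} (G : SimpleGraph V) (U X : Set V) (q k : ℕ) : Prop :=
  ∀ A B : Set V, A ⊆ U → B ⊆ U → A ∪ B = U →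
    (∀ a ∈ A \ B, ∀ b ∈ B \ A, ¬ G.Adj a b) →
    (A ∩ B).ncard ≤ k →
    (A ∩ X).ncard ≤ q ∨ (B ∩ X).ncard ≤ q

/-- A rooted tree decomposition of the graph `G`, with nodes indexed by `ι`. -/
structure TreeDecomp {V : Type*} (G : SimpleGraph V) (ι : Type*) extends RTree ι where
  bag : ι → Set V
  /-- (T1) for every vertex, the set of nodes whose bag contains it
  is a nonempty subtree of the tree. -/
  bag_subtree : ∀ u : V, ((toRTree.treeGraph).induce {x : ι | u ∈ bag x}).Connected
  /-- (T2) every edge is contained in some bag. -/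
  bag_edge : ∀ u v : V, G.Adj u v → ∃ x : ι, u ∈ bag x ∧ v ∈ bag x

namespace TreeDecomp

variable {V ι : Type*} {G : SimpleGraph V} (D : TreeDecomp G ι)

/-- The adhesion of a node: intersection of its bag with the bag of its parent
(empty at the root). -/
def adh (x : ι) : Set V :=
  {v : V | x ≠ D.root ∧ v ∈ D.bag (D.parent x) ∧ v ∈ D.bag x}

/-- The margin of a node. -/
def mrg (x : ι) : Set V := D.bag x \ D.adh x

/-- The cone at a node: union of the bags at all its descendants. -/
def cone (x : ι) : Set V := {v : V | ∃ y : ι, D.toRTree.Anc x y ∧ v ∈ D.bag y}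

/-- The component at a node. -/
def comp (x : ι) : Set V := D.cone x \ D.adh x

/-- A tree decomposition is regular if every non-root node has nonempty margin,
connected component, and every adhesion vertex has a neighbour in the component. -/
def Regular : Prop :=
  ∀ x : ι, x ≠ D.root →
    (D.mrg x).Nonempty ∧
    (G.induce (D.comp x)).Connected ∧
    ∀ u ∈ D.adh x, ∃ w ∈ D.comp x, G.Adj u w

end TreeDecomp

namespace TreeDecomp

variable {V ι : Type*} {G : SimpleGraph V} (D : TreeDecomp G ι)

/-- The bag graph at a node `x`: its vertices are the elements of `bag(x)` together with
the children of `x`; two bag vertices are adjacent iff they are adjacent in `G`, a bag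
vertex is adjacent to a child `y` iff it has a `G`-neighbour in `comp(y)`, and no two
children are adjacent. -/
def bgraph (x : ι) : SimpleGraph (↥(D.bag x) ⊕ {y : ι // D.toRTree.IsChild y x}) where
  Adj a b :=
    match a, b with
    | Sum.inl u, Sum.inl v => G.Adj u v
    | Sum.inl u, Sum.inr y => ∃ w ∈ D.comp y.1, G.Adj (u : V) w
    | Sum.inr y, Sum.inl u => ∃ w ∈ D.comp y.1, G.Adj (u : V) w
    | Sum.inr _, Sum.inr _ => False
  symm := by
    constructor
    rintro (u | y) (v | z) h
    · exact G.adj_symm h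
    · exact h
    · exact h
    · exact h
  loopless := by
    constructor
    rintro (u | y) h
    · exact G.loopless.irrefl _ h
    · exact h

end TreeDecomp

/-- A topological minor model of `H` in `G`: an injective map `η` on vertices together
with, for each edge of `H`, a path in `G` joining the images of its endpoints, the paths
being pairwise internally vertex-disjoint. -/
def IsTopMinorModel {W V : Type*} (H : SimpleGraph W) (G : SimpleGraph V)
    (η : W → V) (p : ∀ u v : W, H.Adj u v → G.Walk (η u) (η v)) : Prop :=
  Function.Injective η ∧
  (∀ (u v : W) (h : H.Adj u v), (p u v h).IsPath) ∧
  (∀ (u v : W) (h : H.Adj u v) (u' v' : W) (h' : H.Adj u' v'), s(u, v) ≠ s(u', v') →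
      ∀ w : V, w ∈ (p u v h).support → w ∉ (p u' v' h').support.tail.dropLast)

/-- `G` contains no topological minor model of the complete graph `K_t`. -/
def TopMinorFree {V : Type*} (t : ℕ) (G : SimpleGraph V) : Prop :=
  ¬ ∃ (η : Fin t → V) (p : ∀ u v : Fin t, (⊤ : SimpleGraph (Fin t)).Adj u v → G.Walk (η u) (η v)),
      IsTopMinorModel ⊤ G η p

/-!
In a model of `K_{t'}` in `bgraph x`, `t' = max t (a + 2)`, no branch vertex is a child `y`:
all bag-graph neighbours of `y` lie in `adh y`, and the `t' - 1 ≥ a + 1` paths leaving `y`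
start with pairwise distinct such neighbours, while `|adh y| ≤ a`. So all branch vertices lie
in `bag x`, and replacing every passage of a path through a child `y` by a path inside the
connected set `comp y` lifts the model to one of `K_{t'}` in `G`. The lifted paths stay
internally disjoint because the sets `comp y` are pairwise disjoint and disjoint from `bag x`.
Since `t ≤ t'`, this contradicts `K_t`-freeness of `G`.
-/

namespace RTree

variable {ι : Type*} (T : RTree ι)

lemma iterate_parent_root (n : ℕ) : T.parent^[n] T.root = T.root :=
  Function.iterate_fixed T.parent_root n

lemma eq_root_of_iterate_parent_eq_self {y : ι} {n : ℕ} (h : T.parent^[n + 1] y = y) :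
    y = T.root := by
  obtain ⟨m, hm⟩ := T.reaches_root y
  have hper : Function.IsPeriodicPt T.parent ((n + 1) * m) y :=
    Function.IsPeriodicPt.mul_const h m
  calc y = T.parent^[(n + 1) * m] y := hper.eq.symm
    _ = T.parent^[n * m] (T.parent^[m] y) := by rw [← Function.iterate_add_apply, add_one_mul]
    _ = T.root := by rw [hm, iterate_parent_root]

variable {T}

lemma not_anc_parent {y : ι} (hy : y ≠ T.root) : ¬ T.Anc y (T.parent y) := fun ⟨n, hn⟩ =>
  hy (T.eq_root_of_iterate_parent_eq_self (by rwa [Function.iterate_succ_apply]))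

lemma anc_of_anc_parent {y z : ι} (h : T.Anc y (T.parent z)) : T.Anc y z := by
  obtain ⟨n, hn⟩ := h
  exact ⟨n + 1, by rwa [Function.iterate_succ_apply]⟩

lemma anc_parent_of_anc_of_ne {y z : ι} (h : T.Anc y z) (hne : y ≠ z) :
    T.Anc y (T.parent z) := by
  obtain ⟨_ | n, hn⟩ := h
  · exact absurd hn hne.symm
  · exact ⟨n, by rwa [Function.iterate_succ_apply] at hn⟩

lemma anc_total {y y' z : ι} (h : T.Anc y z) (h' : T.Anc y' z) : T.Anc y y' ∨ T.Anc y' y := by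
  obtain ⟨n, rfl⟩ := h
  obtain ⟨m, rfl⟩ := h'
  rcases le_total n m with hnm | hmn
  · exact Or.inr ⟨m - n, by rw [← Function.iterate_add_apply, Nat.sub_add_cancel hnm]⟩
  · exact Or.inl ⟨n - m, by rw [← Function.iterate_add_apply, Nat.sub_add_cancel hmn]⟩

lemma eq_of_isChild_of_anc {x y y' z : ι} (hy : T.IsChild y x) (hy' : T.IsChild y' x)
    (h : T.Anc y z) (h' : T.Anc y' z) : y = y' := by
  have key : ∀ {y y'}, T.IsChild y x → T.IsChild y' x → T.Anc y y' → y = y' := by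
    intro y y' hy hy' hyy'
    by_contra hne
    have : T.Anc y (T.parent y) := hy.2 ▸ hy'.2 ▸ anc_parent_of_anc_of_ne hyy' hne
    exact not_anc_parent hy.1 this
  rcases anc_total h h' with hyy' | hy'y
  · exact key hy hy' hyy'
  · exact (key hy' hy hy'y).symm

end RTree

namespace ConnIn

variable {V : Type*} {G : SimpleGraph V} {U U' : Set V} {a b c : V}

lemma refl (ha : a ∈ U) : ConnIn G U a a :=
  ⟨.nil, fun w hw => by
    rw [SimpleGraph.Walk.support_nil, List.mem_singleton] at hw
    exact hw ▸ ha⟩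

lemma of_adj (h : G.Adj a b) (ha : a ∈ U) (hb : b ∈ U) : ConnIn G U a b :=
  ⟨h.toWalk, fun w hw => by
    rcases List.mem_pair.mp (by simpa using hw) with rfl | rfl <;> assumption⟩

lemma trans (h : ConnIn G U a b) (h' : ConnIn G U b c) : ConnIn G U a c := by
  obtain ⟨p, hp⟩ := h
  obtain ⟨p', hp'⟩ := h'
  refine ⟨p.append p', fun w hw => ?_⟩
  rcases (p.mem_support_append_iff p').mp hw with hw | hw
  exacts [hp w hw, hp' w hw]

lemma mono (h : ConnIn G U a b) (hU : U ⊆ U') : ConnIn G U' a b :=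
  let ⟨p, hp⟩ := h
  ⟨p, fun w hw => hU (hp w hw)⟩

lemma of_induce_connected (h : (G.induce U).Connected) (ha : a ∈ U) (hb : b ∈ U) :
    ConnIn G U a b := by
  obtain ⟨p⟩ := h.preconnected ⟨a, ha⟩ ⟨b, hb⟩
  refine ⟨p.map (SimpleGraph.Embedding.induce U).toHom, fun w hw => ?_⟩
  obtain ⟨w', -, rfl⟩ := List.mem_map.mp ((p.support_map _) ▸ hw)
  exact w'.2

end ConnIn

namespace SimpleGraph.Walk

variable {V : Type*} {G : SimpleGraph V} {a b w : V}

lemma eq_or_eq_or_mem_support_tail_dropLast (p : G.Walk a b) (hw : w ∈ p.support) :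
    w = a ∨ w = b ∨ w ∈ p.support.tail.dropLast := by
  cases p with
  | nil => exact Or.inl (List.mem_singleton.mp hw)
  | cons h q =>
    rw [support_cons, List.tail_cons]
    rcases List.mem_cons.mp hw with rfl | hw
    · exact Or.inl rfl
    · rw [← List.dropLast_append_getLast q.support_ne_nil, q.getLast_support, List.mem_append,
        List.mem_singleton] at hw
      tauto

lemma IsPath.ne_of_mem_support_tail_dropLast {p : G.Walk a b} (hp : p.IsPath)
    (hw : w ∈ p.support.tail.dropLast) : w ≠ a ∧ w ≠ b := by
  cases p with
  | nil => simp at hw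
  | cons h q =>
    rw [support_cons, List.tail_cons] at hw
    have hq := (cons_isPath_iff h q).mp hp
    refine ⟨fun hwa => hq.2 (hwa ▸ List.mem_of_mem_dropLast hw), fun hwb => ?_⟩
    have hnd := hq.1.support_nodup
    rw [← List.dropLast_append_getLast q.support_ne_nil, q.getLast_support] at hnd
    exact List.disjoint_of_nodup_append hnd (hwb ▸ hw) (List.mem_singleton_self b)

end SimpleGraph.Walk

namespace IsTopMinorModel

open SimpleGraph

variable {W V : Type*} {H : SimpleGraph W} {G : SimpleGraph V} {η : W → V}
  {p : ∀ u v : W, H.Adj u v → G.Walk (η u) (η v)}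

lemma comap {W' : Type*} {H' : SimpleGraph W'} (hm : IsTopMinorModel H G η p) (f : H' ↪g H) :
    IsTopMinorModel H' G (η ∘ f) (fun u v h => p (f u) (f v) (f.map_adj_iff.mpr h)) := by
  refine ⟨hm.1.comp f.injective, fun u v h => hm.2.1 _ _ _,
    fun u v h u' v' h' hne => hm.2.2 _ _ _ _ _ _ fun heq => hne ?_⟩
  exact Sym2.map.injective f.injective (by simpa using heq)

lemma snd_injective (hm : IsTopMinorModel H G η p) {i j j' : W} (h : H.Adj i j)
    (h' : H.Adj i j') (heq : (p i j h).snd = (p i j' h').snd) : j = j' := by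
  by_contra hne
  have hsne : s(i, j) ≠ s(i, j') := fun hs => hne (Sym2.congr_right.mp hs)
  -- the common second vertex is not interior to the other path, so it is that path's end
  have key : ∀ {k k'} (hk : H.Adj i k) (hk' : H.Adj i k'), s(i, k) ≠ s(i, k') →
      (p i k hk).snd = (p i k' hk').snd → (p i k hk).snd = η k' := by
    intro k k' hk hk' hs he
    have hnil : ¬ (p i k hk).Nil := Walk.not_nil_of_ne (hm.1.ne hk.ne)
    have hmem : (p i k hk).snd ∈ (p i k hk).support :=
      List.mem_of_mem_tail ((p i k hk).snd_mem_tail_support hnil)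
    have hmem' : (p i k hk).snd ∈ (p i k' hk').support := by
      rw [he]
      exact (p i k' hk').getVert_mem_support 1
    rcases (p i k' hk').eq_or_eq_or_mem_support_tail_dropLast hmem' with h1 | h1 | h1
    · exact absurd h1 ((p i k hk).adj_snd hnil).ne.symm
    · exact h1
    · exact absurd h1 (hm.2.2 i k hk i k' hk' hs _ hmem)
  exact hne (hm.1 ((key h' h hsne.symm heq.symm).symm.trans
    (heq.symm.trans (key h h' hsne heq))))

end IsTopMinorModel

lemma TopMinorFree.mono {V : Type*} {G : SimpleGraph V} {s t : ℕ} (h : TopMinorFree s G)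
    (hst : s ≤ t) : TopMinorFree t G := by
  rintro ⟨η, p, hm⟩
  exact h ⟨_, _, hm.comap (SimpleGraph.Embedding.completeGraph (Fin.castLEEmb hst))⟩

namespace TreeDecomp

variable {V ι : Type*} {G : SimpleGraph V} (D : TreeDecomp G ι)

lemma mem_adh_of_anc_of_not_anc {y z z' : ι} {w : V} (hy : y ≠ D.root) (hz : D.Anc y z)
    (hz' : ¬ D.Anc y z') (hw : w ∈ D.bag z) (hw' : w ∈ D.bag z') : w ∈ D.adh y := by
  obtain ⟨q⟩ := (D.bag_subtree w).preconnected ⟨z, hw⟩ ⟨z', hw'⟩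
  obtain ⟨d, -, hin, hout⟩ := q.exists_boundary_dart {s | D.Anc y s.1} hz hz'
  rcases d.adj.2 with ⟨-, hc⟩ | ⟨-, hc⟩
  · change D.parent d.fst.1 = d.snd.1 at hc
    obtain rfl : y = d.fst.1 := by
      by_contra hne
      exact hout (show D.Anc y d.snd.1 from hc ▸ RTree.anc_parent_of_anc_of_ne hin hne)
    exact ⟨hy, hc ▸ d.snd.2, d.fst.2⟩
  · change D.parent d.snd.1 = d.fst.1 at hc
    exact absurd (RTree.anc_of_anc_parent (hc ▸ hin)) hout

/-- `D.bgraph x` is obtained from `G[D.cone x]` by contracting every `D.comp y` to a vertex;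
these are the corresponding branch sets. -/
def branchSet (x : ι) : ↥(D.bag x) ⊕ {y : ι // D.IsChild y x} → Set V
  | .inl u => {(u : V)}
  | .inr y => D.comp y.1

variable {D}

lemma anc_of_mem_comp {y z : ι} {w : V} (hy : y ≠ D.root) (hw : w ∈ D.comp y)
    (hz : w ∈ D.bag z) : D.Anc y z := by
  by_contra hz'
  obtain ⟨⟨z₀, hz₀, hwz₀⟩, hnadh⟩ := hw
  exact hnadh (D.mem_adh_of_anc_of_not_anc hy hz₀ hz' hwz₀ hz)

lemma notMem_bag_of_mem_comp {x y : ι} {w : V} (hxy : D.IsChild y x) (hw : w ∈ D.comp y) :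
    w ∉ D.bag x := fun hx =>
  RTree.not_anc_parent hxy.1 (hxy.2 ▸ anc_of_mem_comp hxy.1 hw hx)

lemma mem_adh_of_adj_mem_comp {x y : ι} {u w : V} (hxy : D.IsChild y x) (hu : u ∈ D.bag x)
    (hw : w ∈ D.comp y) (hadj : G.Adj u w) : u ∈ D.adh y := by
  obtain ⟨z, huz, hwz⟩ := D.bag_edge u w hadj
  exact D.mem_adh_of_anc_of_not_anc hxy.1 (anc_of_mem_comp hxy.1 hw hwz)
    (hxy.2 ▸ RTree.not_anc_parent hxy.1) huz hu

lemma disjoint_comp {x y y' : ι} (hy : D.IsChild y x) (hy' : D.IsChild y' x) (hne : y ≠ y') :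
    Disjoint (D.comp y) (D.comp y') := by
  refine Set.disjoint_left.mpr fun w hw hw' => hne ?_
  obtain ⟨⟨z, hyz, hwz⟩, -⟩ := hw
  exact RTree.eq_of_isChild_of_anc hy hy' hyz (anc_of_mem_comp hy'.1 hw' hwz)

lemma disjoint_branchSet {x : ι} {α β : ↥(D.bag x) ⊕ {y : ι // D.IsChild y x}}
    (hne : α ≠ β) : Disjoint (D.branchSet x α) (D.branchSet x β) := by
  rcases α with u | y <;> rcases β with v | y'
  · exact Set.disjoint_singleton.mpr fun h => hne (congrArg Sum.inl (Subtype.ext h))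
  · exact Set.disjoint_singleton_left.mpr fun hu => notMem_bag_of_mem_comp y'.2 hu u.2
  · exact Set.disjoint_singleton_right.mpr fun hv => notMem_bag_of_mem_comp y.2 hv v.2
  · exact disjoint_comp y.2 y'.2 fun h => hne (congrArg Sum.inr (Subtype.ext h))

lemma connIn_branchSet (hreg : D.Regular) {x : ι} (α : ↥(D.bag x) ⊕ {y : ι // D.IsChild y x})
    {g g' : V} (hg : g ∈ D.branchSet x α) (hg' : g' ∈ D.branchSet x α) :
    ConnIn G (D.branchSet x α) g g' := by
  rcases α with u | y
  · rw [show g = u from hg, show g' = u from hg']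
    exact ConnIn.refl rfl
  · exact ConnIn.of_induce_connected (hreg y.1 y.2.1).2.1 hg hg'

lemma exists_connIn_of_bgraph_adj (hreg : D.Regular) {x : ι}
    {α β : ↥(D.bag x) ⊕ {y : ι // D.IsChild y x}} (h : (D.bgraph x).Adj α β) {g : V}
    (hg : g ∈ D.branchSet x α) :
    ∃ g' ∈ D.branchSet x β, ConnIn G (D.branchSet x α ∪ D.branchSet x β) g g' := by
  rcases α with u | y <;> rcases β with v | y'
  · obtain rfl : g = u := hg
    exact ⟨v, rfl, ConnIn.of_adj h (.inl rfl) (.inr rfl)⟩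
  · obtain rfl : g = u := hg
    obtain ⟨w, hw, huw⟩ := h
    exact ⟨w, hw, ConnIn.of_adj huw (.inl rfl) (.inr hw)⟩
  · obtain ⟨w, hw, hvw⟩ := h
    refine ⟨v, rfl, ?_⟩
    exact ((connIn_branchSet hreg (.inr y) hg hw).mono Set.subset_union_left).trans
      (ConnIn.of_adj hvw.symm (.inl hw) (.inr rfl))
  · exact h.elim

lemma connIn_of_bgraph_walk (hreg : D.Regular) {x : ι}
    {α β : ↥(D.bag x) ⊕ {y : ι // D.IsChild y x}} (p : (D.bgraph x).Walk α β) {g g' : V}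
    (hg : g ∈ D.branchSet x α) (hg' : g' ∈ D.branchSet x β) :
    ConnIn G {w | ∃ γ ∈ p.support, w ∈ D.branchSet x γ} g g' := by
  induction p generalizing g with
  | nil =>
    exact (connIn_branchSet hreg _ hg hg').mono fun w hw => ⟨_, List.mem_singleton_self _, hw⟩
  | cons h p ih =>
    obtain ⟨g'', hg'', hc⟩ := exists_connIn_of_bgraph_adj hreg h hg
    refine (hc.mono ?_).trans ((ih hg'' hg').mono ?_)
    · rintro w (hw | hw)
      · exact ⟨_, p.support.mem_cons_self, hw⟩
      · exact ⟨_, List.mem_cons_of_mem _ p.start_mem_support, hw⟩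
    · rintro w ⟨γ, hγ, hw⟩
      exact ⟨γ, List.mem_cons_of_mem _ hγ, hw⟩

lemma exists_inl_of_bgraph_adj_inr {y : {y : ι // D.IsChild y x}}
    {β : ↥(D.bag x) ⊕ {y : ι // D.IsChild y x}} (h : (D.bgraph x).Adj (.inr y) β) :
    ∃ u : ↥(D.bag x), β = .inl u ∧ (u : V) ∈ D.adh y.1 := by
  rcases β with u | y'
  · obtain ⟨w, hw, huw⟩ := h
    exact ⟨u, rfl, mem_adh_of_adj_mem_comp y.2 u.2 hw huw⟩
  · exact h.elim

end TreeDecomp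

section BagGraphModels

open SimpleGraph TreeDecomp

variable {V ι W : Type*} {G : SimpleGraph V} {D : TreeDecomp G ι} {H : SimpleGraph W} {x : ι}

/-- A branch vertex placed on a child `y` sends its paths into `D.adh y` on their first step. -/
lemma IsTopMinorModel.card_neighborSet_le_ncard_adh [Finite V]
    {η : W → ↥(D.bag x) ⊕ {y : ι // D.IsChild y x}}
    {p : ∀ u v : W, H.Adj u v → (D.bgraph x).Walk (η u) (η v)}
    (hm : IsTopMinorModel H (D.bgraph x) η p) {i : W} {y : {y : ι // D.IsChild y x}}
    (hi : η i = .inr y) : Nat.card (H.neighborSet i) ≤ (D.adh y.1).ncard := by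
  have hsnd : ∀ j : H.neighborSet i,
      ∃ u : ↥(D.bag x), (p i j j.2).snd = .inl u ∧ (u : V) ∈ D.adh y.1 := fun j =>
    exists_inl_of_bgraph_adj_inr
      (hi ▸ (p i j j.2).adj_snd (Walk.not_nil_of_ne (hm.1.ne (H.ne_of_adj j.2))))
  choose u hu hadh using hsnd
  rw [← Nat.card_coe_set_eq]
  refine Nat.card_le_card_of_injective (fun j => ⟨u j, hadh j⟩) fun j j' he =>
    Subtype.ext (hm.snd_injective j.2 j'.2 ?_)
  rw [hu, hu, Subtype.coe_injective (Subtype.mk.inj he)]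

lemma IsTopMinorModel.of_bgraph (hreg : D.Regular) {η : W → ↥(D.bag x)}
    {p : ∀ u v : W, H.Adj u v → (D.bgraph x).Walk (.inl (η u)) (.inl (η v))}
    (hm : IsTopMinorModel H (D.bgraph x) (fun i => .inl (η i)) p) :
    ∃ p' : ∀ u v : W, H.Adj u v → G.Walk (η u) (η v),
      IsTopMinorModel H G (fun i => η i) p' := by
  classical
  choose q hq using fun i j h => connIn_of_bgraph_walk hreg (p i j h) rfl rfl
  refine ⟨fun i j h => (q i j h).bypass, fun i j hij => ?_, fun i j h => (q i j h).bypass_isPath,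
    fun i j h i' j' h' hne w hw hw' => ?_⟩
  · exact hm.1 (congrArg Sum.inl (Subtype.ext hij))
  obtain ⟨hwi, hwj⟩ := (q i' j' h').bypass_isPath.ne_of_mem_support_tail_dropLast hw'
  obtain ⟨γ, hγ, hwγ⟩ := hq i j h w ((q i j h).support_bypass_subset_support hw)
  have hw'' : w ∈ (q i' j' h').support := (q i' j' h').support_bypass_subset_support
    (List.mem_of_mem_tail (List.mem_of_mem_dropLast hw'))
  obtain ⟨γ', hγ', hwγ'⟩ := hq i' j' h' w hw''
  obtain rfl : γ = γ' := by
    by_contra hγγ'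
    exact Set.disjoint_left.mp (disjoint_branchSet hγγ') hwγ hwγ'
  rcases (p i' j' h').eq_or_eq_or_mem_support_tail_dropLast hγ' with rfl | rfl | hint
  · exact hwi hwγ
  · exact hwj hwγ
  · exact hm.2.2 i j h i' j' h' hne γ hγ hint

end BagGraphModels

theorem stmt4_general {V ι : Type*} [Fintype V] {G : SimpleGraph V}
    (D : TreeDecomp G ι) (hreg : D.Regular)
    (a : ℕ) (hadh : ∀ x : ι, (D.adh x).ncard ≤ a)
    (t : ℕ) (hfree : TopMinorFree t G) (x : ι) :
    TopMinorFree (max t (a + 2)) (D.bgraph x) := by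
  rintro ⟨η, p, hm⟩
  by_cases hchild : ∃ i y, η i = .inr y
  · obtain ⟨i, y, hi⟩ := hchild
    have hdeg := IsTopMinorModel.card_neighborSet_le_ncard_adh hm hi
    rw [Nat.card_eq_fintype_card, SimpleGraph.card_neighborSet_eq_degree,
      SimpleGraph.complete_graph_degree, Fintype.card_fin] at hdeg
    have := hadh y.1
    omega
  · have hbag : ∀ i, ∃ u, η i = .inl u := fun i => by
      rcases h : η i with u | y
      exacts [⟨u, rfl⟩, absurd ⟨i, y, h⟩ hchild]
    choose U hU using hbag
    obtain rfl : η = fun i => .inl (U i) := funext hU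
    obtain ⟨p', hm'⟩ := IsTopMinorModel.of_bgraph hreg hm
    exact hfree.mono (le_max_left _ _) ⟨_, p', hm'⟩

/-- If `G` is `K_t`-topological-minor-free and `(T,bag)` is a regular
tree decomposition of adhesion at most `a`, then every bag graph is
`K_{max(t,a+2)}`-topological-minor-free. -/
theorem stmt4 {V ι : Type*} [Fintype V] [Fintype ι] {G : SimpleGraph V}
    (D : TreeDecomp G ι) (hreg : D.Regular)
    (a : ℕ) (hadh : ∀ x : ι, (D.adh x).ncard ≤ a)
    (t : ℕ) (hfree : TopMinorFree t G) (x : ι) :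
    TopMinorFree (max t (a + 2)) (D.bgraph x) :=
  stmt4_general D hreg a hadh t hfree x
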